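/- arXiv:1710.03487 — 2 statements merged into one kernel-verified Lean document; each statement's English description precedes it below -/
import Mathlib

section
/- Let x_1 ≥ … ≥ x_r > 0, λ > 0, μ_k = (1/k)Σ_{i=1}^k x_i, and suppose d < r is the largest integer such that x_i − (λd/(1+λd))μ_d > 0 for all i ≤ d. Then x_{d+1} − (λd/(1+λd)) μ_d ≤ 0. -/
open Finset

lemma sum_filter_val_lt_succ {M : Type*} [AddCommMonoid M] {r : ℕ} (x : Fin r → M) {d : ℕ}
    (hdr : d < r) :
    ∑ i ∈ univ.filter (fun i : Fin r => i.1 < d + 1), x i =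
      (∑ i ∈ univ.filter (fun i : Fin r => i.1 < d), x i) + x ⟨d, hdr⟩ := by
  have hinsert : univ.filter (fun i : Fin r => i.1 < d + 1) =
      insert ⟨d, hdr⟩ (univ.filter fun i : Fin r => i.1 < d) := by
    ext i
    simp only [mem_filter, mem_univ, true_and, mem_insert, Fin.ext_iff]
    omega
  rw [hinsert, sum_insert (by simp), add_comm]

/-- With `s = k μ_k`, this rewrites the threshold `(λk/(1+λk)) μ_k` as `λ s / (1 + λk)`. -/
lemma mul_div_one_add_mul_mul_div (t s k : ℝ) (hk : k = 0 → s = 0) :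
    t * k / (1 + t * k) * (s / k) = t * s / (1 + t * k) := by
  rcases eq_or_ne k 0 with rfl | hk0
  · simp [hk rfl]
  · rw [div_mul_div_comm, mul_right_comm t k s, mul_div_mul_right _ _ hk0]

/-- Both inequalities clear denominators to `a (1 + t k) ≤ t s`. -/
lemma le_threshold_of_le_threshold_succ {a s t k : ℝ} (hk : 0 < 1 + t * k)
    (hk' : 0 < 1 + t * (k + 1)) (h : a ≤ t * (s + a) / (1 + t * (k + 1))) :
    a ≤ t * s / (1 + t * k) := by
  rw [le_div_iff₀ hk]
  rw [le_div_iff₀ hk'] at h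
  linarith

theorem next_entry_below_threshold_general {r : ℕ} (x : Fin r → ℝ) (lam : ℝ) (hlam : 0 < lam)
    (μ : ℕ → ℝ)
    (hμ : ∀ k : ℕ, μ k = (∑ i ∈ univ.filter fun i : Fin r => i.1 < k, x i) / k)
    (d : ℕ) (hdr : d < r)
    (hmax : x ⟨d, hdr⟩ - lam * (d + 1) / (1 + lam * (d + 1)) * μ (d + 1) ≤ 0) :
    x ⟨d, hdr⟩ - lam * d / (1 + lam * d) * μ d ≤ 0 := by
  set S := ∑ i ∈ univ.filter fun i : Fin r => i.1 < d, x i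
  have hthreshold : lam * d / (1 + lam * d) * μ d = lam * S / (1 + lam * d) := by
    refine hμ d ▸ mul_div_one_add_mul_mul_div _ _ _ fun hd => ?_
    obtain rfl : d = 0 := by exact_mod_cast hd
    simp
  have hthreshold_succ : lam * (d + 1) / (1 + lam * (d + 1)) * μ (d + 1) =
      lam * (S + x ⟨d, hdr⟩) / (1 + lam * (d + 1)) := by
    rw [hμ, sum_filter_val_lt_succ, Nat.cast_succ]
    exact mul_div_one_add_mul_mul_div _ _ _ fun hd => absurd hd (by positivity)
  rw [sub_nonpos, hthreshold_succ] at hmax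
  rw [sub_nonpos, hthreshold]
  exact le_threshold_of_le_threshold_succ (by positivity) (by positivity) hmax

/-- If `d < r` is the largest integer such that `x_i - (λd/(1+λd))μ_d > 0` for all
`i ≤ d` (so that, by maximality, `x_{d+1} - (λ(d+1)/(1+λ(d+1)))μ_{d+1} ≤ 0`), then
`x_{d+1} - (λd/(1+λd)) μ_d ≤ 0`. -/
theorem next_entry_below_threshold {r : ℕ} (x : Fin r → ℝ) (lam : ℝ) (hlam : 0 < lam)
    (hpos : ∀ i, 0 < x i) (hmono : ∀ i j : Fin r, i ≤ j → x j ≤ x i)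
    (μ : ℕ → ℝ)
    (hμ : ∀ k : ℕ, μ k = (∑ i ∈ univ.filter fun i : Fin r => i.1 < k, x i) / k)
    (d : ℕ) (hd1 : 1 ≤ d) (hdr : d < r)
    (hmax : x ⟨d, hdr⟩ - lam * (d + 1) / (1 + lam * (d + 1)) * μ (d + 1) ≤ 0) :
    x ⟨d, hdr⟩ - lam * d / (1 + lam * d) * μ d ≤ 0 :=
  next_entry_below_threshold_general x lam hlam μ hμ d hdr hmax
end

section
/- The convex envelope (biconjugate) of the function X ↦ (1/2)‖X‖_△², with ‖X‖_△ defined via the adaptive-dropout variational formula with parameter 0 < θ̄ < 1, equals X ↦ ((1−θ̄)/(2θ̄)) ‖X‖_⋆², where ‖X‖_⋆ is the nuclear norm (sum of singular values) of X. -/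
open Matrix

/-- `‖X‖_△²`: the infimum over `d ≥ rank X` and factorizations `U Vᵀ = X` of
`(d(1-θ̄)/θ̄) Σ_k ‖u_k‖² ‖v_k‖²`. -/
noncomputable def triNormSq (θb : ℝ) {m n : ℕ} (X : Matrix (Fin m) (Fin n) ℝ) : ℝ :=
  sInf {t : ℝ | ∃ (d : ℕ) (U : Matrix (Fin m) (Fin d) ℝ) (V : Matrix (Fin n) (Fin d) ℝ),
    X.rank ≤ d ∧ U * Vᵀ = X ∧
    t = ((d : ℝ) * (1 - θb) / θb) * ∑ k, (∑ i, (U i k) ^ 2) * (∑ j, (V j k) ^ 2)}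

/-- The nuclear norm of a real matrix: the sum of its singular values, i.e. the sum
of the square roots of the eigenvalues of `Xᵀ X`. -/
noncomputable def nuclearNorm {m n : ℕ} (X : Matrix (Fin m) (Fin n) ℝ) : ℝ :=
  ∑ j, Real.sqrt ((Matrix.isHermitian_conjTranspose_mul_self X).eigenvalues j)

/-- The Fenchel conjugate of a function on `m × n` matrices with respect to the
Frobenius (trace) inner product. -/
noncomputable def fenchel {m n : ℕ} (f : Matrix (Fin m) (Fin n) ℝ → ℝ)
    (Q : Matrix (Fin m) (Fin n) ℝ) : ℝ :=
  sSup {t : ℝ | ∃ X : Matrix (Fin m) (Fin n) ℝ,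
    t = (∑ i, ∑ j, Q i j * X i j) - f X}

/-!
Let `X = Σⱼ σⱼ uⱼ vⱼᵀ` be a singular value decomposition and `W = Σⱼ uⱼ vⱼᵀ` its polar factor:
`W` has spectral norm at most one and `⟨W, X⟩ = ‖X‖_⋆`. For a factorization `X = Σₖ aₖ bₖᵀ` with
`d` columns this gives `‖X‖_⋆ ≤ Σₖ ‖aₖ‖ ‖bₖ‖`, hence `‖X‖_⋆² ≤ d Σₖ ‖aₖ‖² ‖bₖ‖²` by
Cauchy–Schwarz. Conversely, cutting each `σⱼ uⱼ vⱼᵀ` into about `M σⱼ / ‖X‖_⋆` equal pieces gives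
factorizations whose cost tends to `‖X‖_⋆²` as `M → ∞`. So `‖X‖_△² = ((1-θ̄)/θ̄) ‖X‖_⋆²`.

The function `κ ‖·‖_⋆²` has the subgradient `2κ ‖X‖_⋆ W` at `X`, and its conjugate is finite
because `⟨Q, Y⟩ ≤ ‖Q‖_F ‖Y‖_⋆`; a function with both properties agrees with its biconjugate at `X`.
-/

open Finset

namespace Matrix

variable {m n ι : Type*} [Fintype ι]

theorem mul_transpose_eq_sum_vecMulVec {R : Type*} [NonUnitalNonAssocSemiring R]
    (U : Matrix m ι R) (V : Matrix n ι R) :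
    U * Vᵀ = ∑ k, vecMulVec (fun i => U i k) (fun j => V j k) := by
  ext i j
  simp [mul_apply, sum_apply, vecMulVec_apply]

variable [Fintype m] [Fintype n]

theorem dotProduct_le_sqrt_mul_sqrt (u v : n → ℝ) : u ⬝ᵥ v ≤ √(u ⬝ᵥ u) * √(v ⬝ᵥ v) := by
  simpa [dotProduct, sq] using Real.sum_mul_le_sqrt_mul_sqrt univ u v

theorem dotProduct_self_sum_smul (c : ι → ℝ) (e : ι → n → ℝ)
    (he : Pairwise fun j k => e j ⬝ᵥ e k = 0) :
    (∑ j, c j • e j) ⬝ᵥ (∑ j, c j • e j) = ∑ j, c j ^ 2 * (e j ⬝ᵥ e j) := by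
  simp only [sum_dotProduct, dotProduct_sum, smul_dotProduct, dotProduct_smul, smul_eq_mul]
  refine sum_congr rfl fun j _ => ?_
  rw [sum_eq_single j (fun k _ hkj => by simp [he hkj]) (by simp)]
  ring

theorem vec_dotProduct_vec_eq_sum {R : Type*} [NonUnitalNonAssocSemiring R] (A B : Matrix m n R) :
    vec A ⬝ᵥ vec B = ∑ i, ∑ j, A i j * B i j := by
  rw [dotProduct, Fintype.sum_prod_type, sum_comm]
  rfl

theorem vec_dotProduct_vec_vecMulVec {R : Type*} [CommSemiring R] (Q : Matrix m n R)
    (a : m → R) (b : n → R) :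
    vec Q ⬝ᵥ vec (vecMulVec a b) = a ⬝ᵥ Q *ᵥ b := by
  rw [vec_dotProduct_vec_eq_sum]
  simp only [vecMulVec_apply, dotProduct, mulVec, mul_sum]
  exact sum_congr rfl fun i _ => sum_congr rfl fun j _ => by ring

theorem vec_vecMulVec_dotProduct_self {R : Type*} [CommSemiring R] (a : m → R) (b : n → R) :
    vec (vecMulVec a b) ⬝ᵥ vec (vecMulVec a b) = (a ⬝ᵥ a) * (b ⬝ᵥ b) := by
  rw [vec_dotProduct_vec_eq_sum]
  simp only [vecMulVec_apply, dotProduct, sum_mul_sum]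
  exact sum_congr rfl fun i _ => sum_congr rfl fun j _ => by ring

section SingularValues

variable [DecidableEq n] (X : Matrix m n ℝ)

noncomputable def singularValue (j : n) : ℝ :=
  √((isHermitian_conjTranspose_mul_self X).eigenvalues j)

noncomputable def rightSingularVector (j : n) : n → ℝ :=
  (isHermitian_conjTranspose_mul_self X).eigenvectorBasis j

/-- With `0⁻¹ = 0`, this vanishes when `X.singularValue j = 0`. -/
noncomputable def leftSingularVector (j : n) : m → ℝ :=
  (X.singularValue j)⁻¹ • (X *ᵥ X.rightSingularVector j)

/-- The partial isometry `U Vᵀ` of the singular value decomposition `X = U Σ Vᵀ`. -/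
noncomputable def polarFactor : Matrix m n ℝ :=
  ∑ j, vecMulVec (X.leftSingularVector j) (X.rightSingularVector j)

theorem singularValue_nonneg (j : n) : 0 ≤ X.singularValue j := Real.sqrt_nonneg _

theorem sq_singularValue (j : n) :
    X.singularValue j ^ 2 = (isHermitian_conjTranspose_mul_self X).eigenvalues j :=
  Real.sq_sqrt ((posSemidef_conjTranspose_mul_self X).eigenvalues_nonneg j)

theorem rightSingularVector_dotProduct (j k : n) :
    X.rightSingularVector j ⬝ᵥ X.rightSingularVector k = (1 : Matrix n n ℝ) j k := by
  have h := congrFun (congrFun (mem_unitaryGroup_iff'.mp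
    (isHermitian_conjTranspose_mul_self X).eigenvectorUnitary.2) j) k
  simpa [mul_apply, dotProduct, rightSingularVector] using h

theorem sum_vecMulVec_rightSingularVector :
    ∑ j, vecMulVec (X.rightSingularVector j) (X.rightSingularVector j) = 1 := by
  set P := (isHermitian_conjTranspose_mul_self X).eigenvectorUnitary
  have h : (P : Matrix n n ℝ) * (P : Matrix n n ℝ)ᵀ = 1 := mem_unitaryGroup_iff.mp P.2
  rwa [mul_transpose_eq_sum_vecMulVec] at h

theorem sum_sq_rightSingularVector_dotProduct (v : n → ℝ) :
    ∑ j, (X.rightSingularVector j ⬝ᵥ v) ^ 2 = v ⬝ᵥ v := by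
  conv_rhs => arg 2; rw [← one_mulVec v, ← sum_vecMulVec_rightSingularVector X, sum_mulVec]
  rw [dotProduct_sum]
  refine sum_congr rfl fun j _ => ?_
  rw [vecMulVec_mulVec, op_smul_eq_smul, dotProduct_smul, smul_eq_mul, dotProduct_comm v, sq]

theorem mulVec_rightSingularVector_dotProduct (j k : n) :
    (X *ᵥ X.rightSingularVector j) ⬝ᵥ (X *ᵥ X.rightSingularVector k) =
      X.singularValue j ^ 2 * (1 : Matrix n n ℝ) j k := by
  rw [dotProduct_mulVec, ← mulVec_transpose, mulVec_mulVec, rightSingularVector,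
    ← conjTranspose_eq_transpose_of_trivial,
    (isHermitian_conjTranspose_mul_self X).mulVec_eigenvectorBasis, smul_dotProduct,
    ← rightSingularVector, rightSingularVector_dotProduct, sq_singularValue, smul_eq_mul]

theorem mulVec_rightSingularVector (j : n) :
    X *ᵥ X.rightSingularVector j = X.singularValue j • X.leftSingularVector j := by
  rcases eq_or_ne (X.singularValue j) 0 with h | h
  · rw [h, zero_smul, ← dotProduct_self_eq_zero, mulVec_rightSingularVector_dotProduct, h]
    simp
  · rw [leftSingularVector, smul_smul, mul_inv_cancel₀ h, one_smul]

theorem leftSingularVector_dotProduct (j k : n) :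
    X.leftSingularVector j ⬝ᵥ X.leftSingularVector k =
      if j = k ∧ X.singularValue j ≠ 0 then 1 else 0 := by
  simp only [leftSingularVector, smul_dotProduct, dotProduct_smul,
    mulVec_rightSingularVector_dotProduct, one_apply, smul_eq_mul]
  by_cases hjk : j = k
  · subst hjk
    by_cases h : X.singularValue j = 0
    · simp [h]
    · simp [h]
      field_simp
  · simp [hjk]

theorem leftSingularVector_dotProduct_self_le_one (j : n) :
    X.leftSingularVector j ⬝ᵥ X.leftSingularVector j ≤ 1 := by
  rw [leftSingularVector_dotProduct]
  split_ifs <;> norm_num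

theorem sum_singularValue_smul_vecMulVec :
    ∑ j, X.singularValue j • vecMulVec (X.leftSingularVector j) (X.rightSingularVector j) = X := by
  conv_rhs => rw [← X.mul_one, ← sum_vecMulVec_rightSingularVector X, Matrix.mul_sum]
  simp only [mul_vecMulVec, mulVec_rightSingularVector, smul_vecMulVec]

theorem vec_dotProduct_vec_eq_sum_singularValue_mul (Q Y : Matrix m n ℝ) :
    vec Q ⬝ᵥ vec Y = ∑ j, Y.singularValue j *
      (Y.leftSingularVector j ⬝ᵥ Q *ᵥ Y.rightSingularVector j) := by
  conv_lhs => rw [← sum_singularValue_smul_vecMulVec Y]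
  simp only [vec_sum, dotProduct_sum, vec_smul, dotProduct_smul, smul_eq_mul,
    vec_dotProduct_vec_vecMulVec]

theorem vec_dotProduct_vec_le_mul_sum_singularValue (Q Y : Matrix m n ℝ) (C : ℝ)
    (hC : ∀ a b, a ⬝ᵥ a ≤ 1 → b ⬝ᵥ b ≤ 1 → a ⬝ᵥ Q *ᵥ b ≤ C) :
    vec Q ⬝ᵥ vec Y ≤ C * ∑ j, Y.singularValue j := by
  rw [vec_dotProduct_vec_eq_sum_singularValue_mul, Finset.mul_sum]
  refine sum_le_sum fun j _ => ?_
  rw [mul_comm C]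
  refine mul_le_mul_of_nonneg_left (hC _ _ (leftSingularVector_dotProduct_self_le_one Y j) ?_)
    (singularValue_nonneg Y j)
  rw [rightSingularVector_dotProduct, one_apply_eq]

theorem vec_dotProduct_vec_le_sqrt_mul_sum_singularValue (Q Y : Matrix m n ℝ) :
    vec Q ⬝ᵥ vec Y ≤ √(vec Q ⬝ᵥ vec Q) * ∑ j, Y.singularValue j :=
  vec_dotProduct_vec_le_mul_sum_singularValue Q Y _ fun a b ha hb => by
    rw [← vec_dotProduct_vec_vecMulVec]
    refine (dotProduct_le_sqrt_mul_sqrt _ _).trans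
      (mul_le_of_le_one_right (Real.sqrt_nonneg _) ?_)
    rw [vec_vecMulVec_dotProduct_self, Real.sqrt_le_one]
    exact mul_le_one₀ ha (sum_nonneg fun i _ => mul_self_nonneg _) hb

theorem polarFactor_mulVec (v : n → ℝ) :
    X.polarFactor *ᵥ v = ∑ j, (X.rightSingularVector j ⬝ᵥ v) • X.leftSingularVector j := by
  simp only [polarFactor, sum_mulVec, vecMulVec_mulVec, op_smul_eq_smul]

theorem polarFactor_mulVec_rightSingularVector (j : n) :
    X.polarFactor *ᵥ X.rightSingularVector j = X.leftSingularVector j := by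
  simp [polarFactor_mulVec, rightSingularVector_dotProduct, one_apply]

theorem dotProduct_polarFactor_mulVec_le (u : m → ℝ) (v : n → ℝ) :
    u ⬝ᵥ X.polarFactor *ᵥ v ≤ √(u ⬝ᵥ u) * √(v ⬝ᵥ v) := by
  refine (dotProduct_le_sqrt_mul_sqrt _ _).trans
    (mul_le_mul_of_nonneg_left (Real.sqrt_le_sqrt ?_) (Real.sqrt_nonneg _))
  have horth : Pairwise fun j k => X.leftSingularVector j ⬝ᵥ X.leftSingularVector k = 0 :=
    fun j k hjk => by simp [leftSingularVector_dotProduct, hjk]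
  rw [polarFactor_mulVec, dotProduct_self_sum_smul _ _ horth,
    ← sum_sq_rightSingularVector_dotProduct X v]
  exact sum_le_sum fun j _ => mul_le_of_le_one_right (sq_nonneg _)
    (leftSingularVector_dotProduct_self_le_one X j)

theorem vec_polarFactor_dotProduct_vec_le (Y : Matrix m n ℝ) :
    vec X.polarFactor ⬝ᵥ vec Y ≤ ∑ j, Y.singularValue j := by
  simpa using vec_dotProduct_vec_le_mul_sum_singularValue _ Y 1 fun a b ha hb =>
    (dotProduct_polarFactor_mulVec_le X a b).trans
      (mul_le_one₀ (Real.sqrt_le_one.mpr ha) (Real.sqrt_nonneg _) (Real.sqrt_le_one.mpr hb))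

theorem vec_polarFactor_dotProduct_vec_self :
    vec X.polarFactor ⬝ᵥ vec X = ∑ j, X.singularValue j := by
  rw [vec_dotProduct_vec_eq_sum_singularValue_mul]
  refine sum_congr rfl fun j _ => ?_
  rw [polarFactor_mulVec_rightSingularVector, leftSingularVector_dotProduct]
  by_cases h : X.singularValue j = 0 <;> simp [h]

end SingularValues

theorem sq_sum_singularValue_mul_transpose_le [DecidableEq n] (U : Matrix m ι ℝ)
    (V : Matrix n ι ℝ) :
    (∑ j, (U * Vᵀ).singularValue j) ^ 2 ≤
      Fintype.card ι * ∑ k, (∑ i, U i k ^ 2) * ∑ j, V j k ^ 2 := by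
  set a : ι → ℝ := fun k => ∑ i, U i k ^ 2
  set b : ι → ℝ := fun k => ∑ j, V j k ^ 2
  have hsum : ∑ j, (U * Vᵀ).singularValue j ≤ ∑ k, √(a k) * √(b k) := by
    calc ∑ j, (U * Vᵀ).singularValue j
        = vec (U * Vᵀ).polarFactor ⬝ᵥ vec (∑ k, vecMulVec (fun i => U i k) (fun j => V j k)) := by
          rw [← mul_transpose_eq_sum_vecMulVec, vec_polarFactor_dotProduct_vec_self]
      _ ≤ ∑ k, √(a k) * √(b k) := by
          rw [vec_sum, dotProduct_sum]
          refine sum_le_sum fun k _ => ?_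
          rw [vec_dotProduct_vec_vecMulVec]
          simpa [a, b, dotProduct, sq] using dotProduct_polarFactor_mulVec_le _ _ _
  calc (∑ j, (U * Vᵀ).singularValue j) ^ 2
      ≤ (∑ k, √(a k) * √(b k)) ^ 2 :=
        pow_le_pow_left₀ (sum_nonneg fun j _ => singularValue_nonneg _ j) hsum 2
    _ ≤ Fintype.card ι * ∑ k, (√(a k) * √(b k)) ^ 2 := sq_sum_le_card_mul_sum_sq
    _ = Fintype.card ι * ∑ k, a k * b k := by
        simp only [mul_pow, Real.sq_sqrt (sum_nonneg fun _ _ => sq_nonneg _), a, b]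

end Matrix

open Filter Topology

section TriNormSq

variable {θb : ℝ} {m n : ℕ}

theorem nuclearNorm_eq_sum_singularValue (X : Matrix (Fin m) (Fin n) ℝ) :
    nuclearNorm X = ∑ j, X.singularValue j := rfl

theorem triNormSq_mul_transpose_le (hθ : 0 ≤ (1 - θb) / θb) {ι : Type*} [Fintype ι]
    (U : Matrix (Fin m) ι ℝ) (V : Matrix (Fin n) ι ℝ) :
    triNormSq θb (U * Vᵀ) ≤
      (Fintype.card ι * (1 - θb) / θb) * ∑ k, (∑ i, U i k ^ 2) * ∑ j, V j k ^ 2 := by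
  let e := Fintype.equivFin ι
  refine csInf_le ⟨0, ?_⟩
    ⟨Fintype.card ι, U.submatrix id e.symm, V.submatrix id e.symm, ?_, ?_, ?_⟩
  · rintro t ⟨d, U, V, -, -, rfl⟩
    rw [mul_div_assoc]
    exact mul_nonneg (mul_nonneg d.cast_nonneg hθ) (sum_nonneg fun k _ => by positivity)
  · exact (rank_mul_le_left U Vᵀ).trans (rank_le_card_width U)
  · rw [transpose_submatrix, submatrix_mul_equiv, submatrix_id_id]
  · exact congrArg _ (e.symm.sum_comp fun k => (∑ i, U i k ^ 2) * ∑ j, V j k ^ 2).symm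

theorem mul_sq_nuclearNorm_le_triNormSq (hθ : 0 ≤ (1 - θb) / θb)
    (X : Matrix (Fin m) (Fin n) ℝ) :
    (1 - θb) / θb * nuclearNorm X ^ 2 ≤ triNormSq θb X := by
  refine le_csInf ⟨_, n, X, 1, rank_le_width X, by simp, rfl⟩ ?_
  rintro t ⟨d, U, V, -, rfl, rfl⟩
  calc (1 - θb) / θb * nuclearNorm (U * Vᵀ) ^ 2
      ≤ (1 - θb) / θb * (d * ∑ k, (∑ i, U i k ^ 2) * ∑ j, V j k ^ 2) := by
        refine mul_le_mul_of_nonneg_left ?_ hθ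
        simpa [nuclearNorm_eq_sum_singularValue] using sq_sum_singularValue_mul_transpose_le U V
    _ = _ := by ring

theorem triNormSq_le_of_multiplicity (hθ : 0 ≤ (1 - θb) / θb) (X : Matrix (Fin m) (Fin n) ℝ)
    (t : Fin n → ℕ) (ht : ∀ j, t j = 0 → X.singularValue j = 0) :
    triNormSq θb X ≤ ((∑ j, t j : ℕ) * (1 - θb) / θb) * ∑ j, X.singularValue j ^ 2 / t j := by
  set α : Fin n → ℝ := fun j => √(X.singularValue j / t j)
  have hα : ∀ j, α j ^ 2 = X.singularValue j / t j := fun j =>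
    Real.sq_sqrt (div_nonneg (X.singularValue_nonneg j) (Nat.cast_nonneg _))
  set U : Matrix (Fin m) (Σ j, Fin (t j)) ℝ := of fun i p => α p.1 * X.leftSingularVector p.1 i
  set V : Matrix (Fin n) (Σ j, Fin (t j)) ℝ := of fun i p => α p.1 * X.rightSingularVector p.1 i
  have hUV : U * Vᵀ = X := by
    conv_rhs => rw [← sum_singularValue_smul_vecMulVec X]
    ext i i'
    simp [U, V, mul_apply, Fintype.sum_sigma, Matrix.sum_apply, vecMulVec_apply]
    refine sum_congr rfl fun j _ => ?_
    have hj : (t j : ℝ) * α j ^ 2 = X.singularValue j := by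
      rcases eq_or_ne (t j) 0 with h | h
      · simp [h, ht j h]
      · rw [hα]
        field_simp
    rw [← hj]
    ring
  have hcost : ∀ p : Σ j, Fin (t j),
      (∑ i, U i p ^ 2) * ∑ i, V i p ^ 2 ≤ (X.singularValue p.1 / t p.1) ^ 2 := by
    rintro ⟨j, r⟩
    have hU : ∑ i, U i ⟨j, r⟩ ^ 2 =
        α j ^ 2 * (X.leftSingularVector j ⬝ᵥ X.leftSingularVector j) := by
      simp only [U, of_apply, dotProduct, mul_sum]
      exact sum_congr rfl fun i _ => by ring
    have hV : ∑ i, V i ⟨j, r⟩ ^ 2 = α j ^ 2 := by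
      have h := X.rightSingularVector_dotProduct j j
      rw [one_apply_eq, dotProduct] at h
      simp only [V, of_apply, mul_pow, ← mul_sum, sq (X.rightSingularVector j _), h, mul_one]
    rw [hU, hV, hα]
    calc (X.singularValue j / t j) * (X.leftSingularVector j ⬝ᵥ X.leftSingularVector j) *
          (X.singularValue j / t j)
        = (X.singularValue j / t j) ^ 2 *
          (X.leftSingularVector j ⬝ᵥ X.leftSingularVector j) := by ring
      _ ≤ (X.singularValue j / t j) ^ 2 :=
        mul_le_of_le_one_right (sq_nonneg _) (leftSingularVector_dotProduct_self_le_one X j)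
  have hcoef : (0 : ℝ) ≤ (∑ j, t j : ℕ) * (1 - θb) / θb := by
    rw [mul_div_assoc]; exact mul_nonneg (Nat.cast_nonneg _) hθ
  calc triNormSq θb X = triNormSq θb (U * Vᵀ) := by rw [hUV]
    _ ≤ _ := triNormSq_mul_transpose_le hθ U V
    _ ≤ _ := by
        rw [Fintype.card_sigma]
        simp only [Fintype.card_fin]
        refine mul_le_mul_of_nonneg_left ?_ hcoef
        rw [Fintype.sum_sigma]
        refine sum_le_sum fun j _ => (sum_le_sum fun r _ => hcost ⟨j, r⟩).trans_eq ?_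
        rcases eq_or_ne (t j) 0 with h | h
        · simp [h]
        · simp only [sum_const, card_univ, Fintype.card_fin, nsmul_eq_mul]
          field_simp

theorem triNormSq_le_mul_one_add (hθ : 0 ≤ (1 - θb) / θb) (X : Matrix (Fin m) (Fin n) ℝ)
    {M : ℕ} (hM : 0 < M) :
    triNormSq θb X ≤ (1 - θb) / θb * nuclearNorm X ^ 2 * (1 + n / M) := by
  set N := nuclearNorm X
  set σ := X.singularValue
  have hσ : ∀ j, 0 ≤ σ j := X.singularValue_nonneg
  have hMR : (0 : ℝ) < M := Nat.cast_pos.mpr hM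
  have hNσ : ∑ j, σ j = N := rfl
  have hN : 0 ≤ N := sum_nonneg fun j _ => hσ j
  -- `σ j` is split into `⌈M σ j / N⌉` equal rank-one pieces
  set t : Fin n → ℕ := fun j => ⌈M * σ j / N⌉₊
  have ht : ∀ j, σ j ≠ 0 → 0 < N ∧ M * σ j / N ≤ t j ∧ 0 < (t j : ℝ) := by
    intro j hj
    have hσj : 0 < σ j := (hσ j).lt_of_ne' hj
    have hN : 0 < N := hσj.trans_le (single_le_sum (fun k _ => hσ k) (mem_univ j))
    have hle : M * σ j / N ≤ t j := Nat.le_ceil _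
    exact ⟨hN, hle, (by positivity : (0 : ℝ) < M * σ j / N).trans_le hle⟩
  have hsum_t : ((∑ j, t j : ℕ) : ℝ) ≤ M + n := by
    push_cast
    calc ∑ j, (t j : ℝ) ≤ ∑ j, (M * σ j / N + 1) :=
          sum_le_sum fun j _ => (Nat.ceil_lt_add_one (div_nonneg (mul_nonneg hMR.le (hσ j)) hN)).le
      _ = M * (N / N) + n := by
          rw [sum_add_distrib, ← sum_div, ← mul_sum, hNσ]
          simp [mul_div_assoc]
      _ ≤ M + n := by
          gcongr
          exact mul_le_of_le_one_right hMR.le (div_self_le_one N)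
  have hsum_sq : ∑ j, σ j ^ 2 / t j ≤ N ^ 2 / M := by
    calc ∑ j, σ j ^ 2 / t j ≤ ∑ j, σ j * N / M := sum_le_sum fun j _ => ?_
      _ = N ^ 2 / M := by rw [← sum_div, ← sum_mul, hNσ, sq]
    rcases eq_or_ne (σ j) 0 with h | h
    · simp [h]
    · obtain ⟨hN, hle, htpos⟩ := ht j h
      rw [div_le_div_iff₀ htpos hMR]
      nlinarith [(div_le_iff₀ hN).mp hle, hσ j]
  have hzero : ∀ j, t j = 0 → σ j = 0 := fun j h =>
    by_contra fun hj => (ht j hj).2.2.ne' (by simp [h])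
  refine (triNormSq_le_of_multiplicity hθ X t hzero).trans ?_
  calc ((∑ j, t j : ℕ) * (1 - θb) / θb) * ∑ j, σ j ^ 2 / t j
      ≤ ((M + n) * (1 - θb) / θb) * (N ^ 2 / M) := by
        simp only [mul_div_assoc]
        gcongr
      _ = _ := by field_simp

theorem triNormSq_eq (h0 : 0 < θb) (h1 : θb < 1) (X : Matrix (Fin m) (Fin n) ℝ) :
    triNormSq θb X = (1 - θb) / θb * nuclearNorm X ^ 2 := by
  have hθ : 0 ≤ (1 - θb) / θb := div_nonneg (by linarith) h0.le
  refine le_antisymm ?_ (mul_sq_nuclearNorm_le_triNormSq hθ X)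
  have hlim : Tendsto (fun M : ℕ => (1 - θb) / θb * nuclearNorm X ^ 2 * (1 + n / M)) atTop
      (𝓝 ((1 - θb) / θb * nuclearNorm X ^ 2)) := by
    simpa using ((tendsto_const_div_atTop_nhds_zero_nat (n : ℝ)).const_add 1).const_mul
      ((1 - θb) / θb * nuclearNorm X ^ 2)
  exact ge_of_tendsto hlim (eventually_atTop.2 ⟨1, fun M hM => triNormSq_le_mul_one_add hθ X hM⟩)

end TriNormSq

section Fenchel

variable {m n : ℕ}

theorem fenchel_eq_iSup (f : Matrix (Fin m) (Fin n) ℝ → ℝ) (Q : Matrix (Fin m) (Fin n) ℝ) :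
    fenchel f Q = ⨆ Y, vec Q ⬝ᵥ vec Y - f Y := by
  simp only [fenchel, iSup, vec_dotProduct_vec_eq_sum, Set.range, eq_comm]

theorem fenchel_fenchel_eq_of_subgradient (f : Matrix (Fin m) (Fin n) ℝ → ℝ)
    (hf : ∀ Q, BddAbove (Set.range fun Y => vec Q ⬝ᵥ vec Y - f Y))
    {X Q₀ : Matrix (Fin m) (Fin n) ℝ}
    (hQ₀ : ∀ Y, vec Q₀ ⬝ᵥ vec Y - f Y ≤ vec Q₀ ⬝ᵥ vec X - f X) :
    fenchel (fenchel f) X = f X := by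
  have hle : ∀ Q, vec X ⬝ᵥ vec Q - fenchel f Q ≤ f X := fun Q => by
    have := le_ciSup (hf Q) X
    rw [fenchel_eq_iSup, dotProduct_comm]
    linarith
  have hQ₀' : fenchel f Q₀ = vec Q₀ ⬝ᵥ vec X - f X := by
    rw [fenchel_eq_iSup]
    exact le_antisymm (ciSup_le hQ₀) (le_ciSup (hf Q₀) X)
  rw [fenchel_eq_iSup]
  refine le_antisymm (ciSup_le hle) ?_
  calc f X = vec X ⬝ᵥ vec Q₀ - fenchel f Q₀ := by rw [hQ₀', dotProduct_comm]; ring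
    _ ≤ _ := le_ciSup ⟨f X, Set.forall_mem_range.2 hle⟩ Q₀

theorem fenchel_fenchel_mul_sq_nuclearNorm {κ : ℝ} (hκ : 0 < κ) (X : Matrix (Fin m) (Fin n) ℝ) :
    fenchel (fenchel fun Y => κ * nuclearNorm Y ^ 2) X = κ * nuclearNorm X ^ 2 := by
  refine fenchel_fenchel_eq_of_subgradient _ (fun Q => ⟨√(vec Q ⬝ᵥ vec Q) ^ 2 / (4 * κ), ?_⟩)
    (Q₀ := (2 * κ * nuclearNorm X) • X.polarFactor) fun Y => ?_
  · rintro _ ⟨Y, rfl⟩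
    have := vec_dotProduct_vec_le_sqrt_mul_sum_singularValue Q Y
    rw [← nuclearNorm_eq_sum_singularValue] at this
    rw [le_div_iff₀ (by positivity)]
    nlinarith [sq_nonneg (√(vec Q ⬝ᵥ vec Q) - 2 * κ * nuclearNorm Y)]
  · have hX : 0 ≤ nuclearNorm X := sum_nonneg fun j _ => X.singularValue_nonneg j
    have hY := X.vec_polarFactor_dotProduct_vec_le Y
    simp only [vec_smul, smul_dotProduct, smul_eq_mul, vec_polarFactor_dotProduct_vec_self,
      ← nuclearNorm_eq_sum_singularValue] at hY ⊢
    nlinarith [mul_nonneg hκ.le (sq_nonneg (nuclearNorm X - nuclearNorm Y)),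
      mul_le_mul_of_nonneg_left hY (by positivity : 0 ≤ 2 * κ * nuclearNorm X)]

end Fenchel

/-- The convex envelope (Fenchel biconjugate) of `X ↦ (1/2)‖X‖_△²` is
`X ↦ ((1-θ̄)/(2θ̄)) ‖X‖_⋆²`, the scaled squared nuclear norm. -/
theorem convex_envelope_triNormSq (θb : ℝ) (h0 : 0 < θb) (h1 : θb < 1) {m n : ℕ}
    (X : Matrix (Fin m) (Fin n) ℝ) :
    fenchel (fenchel (fun Y => (1 / 2) * triNormSq θb Y)) X =
      ((1 - θb) / (2 * θb)) * (nuclearNorm X) ^ 2 := by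
  have hf : (fun Y : Matrix (Fin m) (Fin n) ℝ => (1 / 2) * triNormSq θb Y) =
      fun Y => (1 - θb) / (2 * θb) * nuclearNorm Y ^ 2 := by
    funext Y
    rw [triNormSq_eq h0 h1]
    field_simp
  rw [hf, fenchel_fenchel_mul_sq_nuclearNorm (div_pos (by linarith) (by linarith))]
end
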